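/- Let Δ : Fix(φ) → ℝ/2Nℤ assign mean indices, growing linearly under iteration: Δ_{φ^k}(x) = k·Δ(x) for x ∈ Fix(φ) ⊆ Fix(φ^k). Suppose Fix(φ) = {x₁,…,x_m} is finite with all Δ(x_i) ≠ 0 in ℝ/2Nℤ, and suppose there is a sequence of primes p_j → ∞ such that for each j some i(j) satisfies p_j Δ(x_{i(j)}) ∈ [0, 2n] mod 2N, where 2n < 2N. Then, if additionally the lifted values Δ₁,…,Δ_m ∈ ℝ satisfy: 1, Δ₁/2N, …, Δ_m/2N rationally independent implies density of ((p_jΔ₁ mod 2N),…,(p_jΔ_m mod 2N)) in the torus, it follows that Δ₁,…,Δ_m satisfy a nontrivial integer linear relation a₁Δ₁ + … + a_mΔ_m ≡ 0 mod 2N. -/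
import Mathlib


/-- abstract form of Proposition 4.1 together with the conclusion of
Theorem 1.5.  `Δ i` are (lifts of) the mean indices of the fixed points `x i` of `φ`,
growing linearly under iteration; a mod-2N value is nonzero iff the lift is not of the
form `2N·b`, and `p_j Δ_i ∈ [0,2n] mod 2N` means `p_j Δ_i − 2N·b ∈ [0,2n]` for some
integer `b`. -/
theorem stmt7 {X : Type*} (φ : X → X) (m n N : ℕ) (hnN : 2 * n < 2 * N) (hN : 0 < N)
    (x : Fin m → X) (hfix : {y : X | φ y = y} = Set.range x)
    (Δ : Fin m → ℝ)
    -- all mean indices nonzero mod 2N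
    (hnonzero : ∀ i, ¬ ∃ b : ℤ, Δ i = 2 * N * b)
    -- a sequence of primes p_j → ∞ …
    (q : ℕ → ℕ) (hq : ∀ j, (q j).Prime) (hq' : StrictMono q)
    -- … such that for each j, some i(j) satisfies q j · Δ_{i(j)} ∈ [0,2n] mod 2N
    (hcube : ∀ j : ℕ, ∃ i : Fin m, ∃ b : ℤ,
      (q j : ℝ) * Δ i - 2 * N * b ∈ Set.Icc (0 : ℝ) (2 * n))
    -- Harman: rational independence of 1, Δ₁/2N, …, Δ_m/2N implies density in the torus
    (hharman : (∀ (c₀ : ℤ) (c : Fin m → ℤ),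
        (c₀ : ℝ) + ∑ i, (c i : ℝ) * (Δ i / (2 * N)) = 0 → c₀ = 0 ∧ ∀ i, c i = 0) →
      ∀ y : Fin m → ℝ, (∀ i, y i ∈ Set.Ioo (0 : ℝ) (2 * N)) → ∀ ε : ℝ, 0 < ε →
        ∃ j : ℕ, ∀ i,
          |2 * (N : ℝ) * Int.fract ((q j : ℝ) * Δ i / (2 * N)) - y i| < ε) :
    ∃ (a : Fin m → ℤ) (b : ℤ), (∃ i, a i ≠ 0) ∧
      ∑ i, (a i : ℝ) * Δ i = 2 * N * b := by
  have hNpos : (0:ℝ) < 2 * N := by positivity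
  have h2n : (2 * n : ℝ) < 2 * N := by exact_mod_cast hnN
  by_cases hind : (∀ (c₀ : ℤ) (c : Fin m → ℤ),
      (c₀ : ℝ) + ∑ i, (c i : ℝ) * (Δ i / (2 * N)) = 0 → c₀ = 0 ∧ ∀ i, c i = 0)
  · -- independence: density contradicts hcube
    exfalso
    have hn : (n:ℝ) < N := by linarith
    have hy : ∀ _ : Fin m, ((n:ℝ) + N) ∈ Set.Ioo (0:ℝ) (2 * N) :=
      fun _ => ⟨by positivity, by linarith⟩
    obtain ⟨j, hj⟩ := hharman hind (fun _ => (n:ℝ) + N) hy ((N:ℝ) - n) (by linarith)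
    obtain ⟨i, b, hb0, hb1⟩ := hcube j
    have key : 2 * (N:ℝ) * Int.fract ((q j : ℝ) * Δ i / (2 * N)) =
        (q j : ℝ) * Δ i - 2 * N * b := by
      have h1 : Int.fract ((q j : ℝ) * Δ i / (2 * N)) =
          Int.fract ((q j : ℝ) * Δ i / (2 * N) - b) := (Int.fract_sub_intCast _ _).symm
      rw [h1, Int.fract_eq_self.mpr]
      · field_simp
      constructor
      · rw [sub_nonneg, le_div_iff₀ hNpos]
        nlinarith
      · rw [sub_lt_iff_lt_add, div_lt_iff₀ hNpos]
        nlinarith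
    have h2 := hj i
    rw [key, abs_lt] at h2
    nlinarith [h2.1, h2.2]
  · push_neg at hind
    obtain ⟨c₀, c, heq, hne⟩ := hind
    have hci : ∃ i, c i ≠ 0 := by
      by_contra hall
      push_neg at hall
      have hsum : ∑ i, (c i : ℝ) * (Δ i / (2 * N)) = 0 :=
        Finset.sum_eq_zero (fun i _ => by rw [hall i]; simp)
      rw [hsum, add_zero] at heq
      have hc0 : c₀ = 0 := by exact_mod_cast heq
      obtain ⟨i, hi⟩ := hne hc0
      exact hi (hall i)
    refine ⟨c, -c₀, hci, ?_⟩
    have h3 : ∑ i, (c i : ℝ) * Δ i = 2 * N * ∑ i, (c i : ℝ) * (Δ i / (2 * N)) := by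
      rw [Finset.mul_sum]
      refine Finset.sum_congr rfl (fun i _ => ?_)
      field_simp
    have hs : ∑ i, (c i : ℝ) * (Δ i / (2 * N)) = -c₀ := by linarith
    rw [h3, hs]
    push_cast
    ring
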